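/- Let k₁ > 0 and k₂ > 0 be real parameters and let x ≠ 0 be a real number. If f : ℝ → ℝ is a measurable function with f(y) ≥ 0 for all y, then V f(x) := ∫_{−|x|}^{|x|} K(x,y) f(y) dy ≥ 0. Moreover, if f is continuous and f(y₀) > 0 for some y₀ with |y₀| < |x|, and f is integrable against K(x,·) on (−|x|,|x|), then V f(x) > 0. -/

import Mathlib

/-!
For `|y| < z < |x|` every factor of the integrand of `K x y` is positive; for `σ` this is a
comparison of exponentials once it is written as
`sign x * (e^x + 1 - e^((z - y)/2) - e^(-(z + y)/2))`. Despite the singular powers the integrand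
is integrable: near `z = |y|` it is a continuous function times the derivative of
`(cosh (z/2) - cosh (y/2)) ^ k₁`, near `z = |x|` one times the derivative of
`(cosh x - cosh z) ^ k₂`. So `K x y > 0` for `|y| < |x|`, and `K x y = 0` for `|y| = |x|`.
Hence `K x · f ≥ 0` on `[-|x|, |x|]`, and it is positive on the open set where `f > 0`, which
has positive measure as soon as it contains some `y₀`.
-/

open Real MeasureTheory intervalIntegral

noncomputable section

/-- `A(x) = |2 sinh(x/2)|^{2k₁} · |2 sinh x|^{2k₂}` -/
def A (k₁ k₂ x : ℝ) : ℝ :=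
  |2 * Real.sinh (x / 2)| ^ (2 * k₁) * |2 * Real.sinh x| ^ (2 * k₂)

/-- `c = 2^{3k₁+3k₂} · Γ(k₁+k₂+1/2) / (√π · Γ(k₁) · Γ(k₂))` -/
def c (k₁ k₂ : ℝ) : ℝ :=
  2 ^ (3 * k₁ + 3 * k₂) * Real.Gamma (k₁ + k₂ + 1 / 2) /
    (Real.sqrt Real.pi * Real.Gamma k₁ * Real.Gamma k₂)

/-- `σ(x,y,z) = sign(x)·( e^{x/2}·(2 cosh(x/2)) − e^{−y/2}·(2 cosh(z/2)) )` -/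
def sigmaK (x y z : ℝ) : ℝ :=
  Real.sign x *
    (Real.exp (x / 2) * (2 * Real.cosh (x / 2)) -
      Real.exp (-y / 2) * (2 * Real.cosh (z / 2)))

/-- The kernel `K(x,y)` of the intertwining operator, for `|x| > |y|`. -/
def K (k₁ k₂ x y : ℝ) : ℝ :=
  c k₁ k₂ / 4 * (A k₁ k₂ x)⁻¹ *
    ∫ z in |y|..|x|,
      sigmaK x y z * (Real.cosh (z / 2) - Real.cosh (y / 2)) ^ (k₁ - 1) *
        (Real.cosh x - Real.cosh z) ^ (k₂ - 1) * Real.sinh (z / 2)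

end

open Set

lemma hasDerivAt_rpow_div_self {φ : ℝ → ℝ} {φ' z p : ℝ} (hφ : HasDerivAt φ φ' z)
    (hz : 0 < φ z) (hp : 0 < p) :
    HasDerivAt (fun w => φ w ^ p / p) (φ z ^ (p - 1) * φ') z := by
  refine ((hφ.rpow_const (Or.inl hz.ne')).div_const p).congr_deriv ?_
  field_simp

lemma intervalIntegrable_rpow_sub_one_mul_deriv_of_nonneg {φ φ' : ℝ → ℝ} {a b p : ℝ}
    (hp : 0 < p) (hφ : ContinuousOn φ (uIcc a b))
    (hderiv : ∀ z ∈ Ioo (min a b) (max a b), HasDerivAt φ (φ' z) z)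
    (hpos : ∀ z ∈ Ioo (min a b) (max a b), 0 < φ z)
    (hφ' : ∀ z ∈ Ioo (min a b) (max a b), 0 ≤ φ' z) :
    IntervalIntegrable (fun z => φ z ^ (p - 1) * φ' z) volume a b :=
  intervalIntegrable_deriv_of_nonneg (g := fun w => φ w ^ p / p)
    ((hφ.rpow_const fun _ _ => Or.inr hp.le).div_const p)
    (fun z hz => hasDerivAt_rpow_div_self (hderiv z hz) (hpos z hz) hp)
    (fun z hz => mul_nonneg (rpow_nonneg (hpos z hz).le _) (hφ' z hz))

lemma intervalIntegrable_rpow_sub_one_mul_deriv_of_nonpos {φ φ' : ℝ → ℝ} {a b p : ℝ}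
    (hp : 0 < p) (hφ : ContinuousOn φ (uIcc a b))
    (hderiv : ∀ z ∈ Ioo (min a b) (max a b), HasDerivAt φ (φ' z) z)
    (hpos : ∀ z ∈ Ioo (min a b) (max a b), 0 < φ z)
    (hφ' : ∀ z ∈ Ioo (min a b) (max a b), φ' z ≤ 0) :
    IntervalIntegrable (fun z => φ z ^ (p - 1) * φ' z) volume a b := by
  have h := intervalIntegrable_deriv_of_nonneg (g := fun w => -(φ w ^ p / p))
    ((hφ.rpow_const fun _ _ => Or.inr hp.le).div_const p).neg
    (fun z hz => (hasDerivAt_rpow_div_self (hderiv z hz) (hpos z hz) hp).neg)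
    (fun z hz => neg_nonneg.2 (mul_nonpos_of_nonneg_of_nonpos
      (rpow_nonneg (hpos z hz).le _) (hφ' z hz)))
  convert h.neg using 1
  ext z
  simp

lemma intervalIntegral_pos_of_pos_on_isOpen {g : ℝ → ℝ} {a b : ℝ} {U : Set ℝ}
    (hU : IsOpen U) (hne : U.Nonempty) (hUab : U ⊆ Ioc a b) (hg : IntervalIntegrable g volume a b)
    (hnonneg : ∀ y ∈ Ioc a b, 0 ≤ g y) (hpos : ∀ y ∈ U, 0 < g y) :
    0 < ∫ y in a..b, g y := by
  obtain ⟨y₀, hy₀⟩ := hne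
  have hab : a < b := (hUab hy₀).1.trans_le (hUab hy₀).2
  rw [intervalIntegral.integral_pos_iff_support_of_nonneg_ae' _ hg]
  · refine ⟨hab, (hU.measure_pos volume ⟨y₀, hy₀⟩).trans_le (measure_mono ?_)⟩
    exact fun y hy => ⟨(hpos y hy).ne', hUab hy⟩
  · rw [uIoc_of_le hab.le]
    exact (ae_restrict_iff' measurableSet_Ioc).2 (Filter.Eventually.of_forall hnonneg)

lemma cosh_half_sub_cosh_half_pos {y z : ℝ} (hyz : |y| < z) :
    0 < cosh (z / 2) - cosh (y / 2) := by
  have hz : 0 < z := (abs_nonneg y).trans_lt hyz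
  refine sub_pos.2 (cosh_lt_cosh.2 ?_)
  rw [abs_div, abs_div, abs_two, abs_of_pos hz]
  linarith

lemma cosh_sub_cosh_pos {x z : ℝ} (hz : 0 ≤ z) (hzx : z < |x|) : 0 < cosh x - cosh z :=
  sub_pos.2 (cosh_lt_cosh.2 (by rwa [abs_of_nonneg hz]))

lemma c_pos {k₁ k₂ : ℝ} (hk₁ : 0 < k₁) (hk₂ : 0 < k₂) : 0 < c k₁ k₂ := by
  have := Gamma_pos_of_pos hk₁
  have := Gamma_pos_of_pos hk₂
  have := Gamma_pos_of_pos (by linarith : 0 < k₁ + k₂ + 1 / 2)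
  unfold c
  positivity

lemma A_pos (k₁ k₂ : ℝ) {x : ℝ} (hx : x ≠ 0) : 0 < A k₁ k₂ x := by
  have h₁ : 2 * sinh (x / 2) ≠ 0 := by simpa using hx
  have h₂ : 2 * sinh x ≠ 0 := by simpa using hx
  unfold A
  positivity

lemma sigmaK_eq (x y z : ℝ) :
    sigmaK x y z = Real.sign x * (exp x + 1 - (exp ((z - y) / 2) + exp (-(z + y) / 2))) := by
  have hx : exp x = exp (x / 2) * exp (x / 2) := by rw [← exp_add, add_halves]
  have hzy : exp ((z - y) / 2) = exp (-y / 2) * exp (z / 2) := by rw [← exp_add]; ring_nf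
  have hzy' : exp (-(z + y) / 2) = exp (-y / 2) * exp (-(z / 2)) := by rw [← exp_add]; ring_nf
  have hinv : exp (x / 2) * exp (-(x / 2)) = 1 := by rw [← exp_add, add_neg_cancel, exp_zero]
  rw [sigmaK, cosh_eq, cosh_eq, hx, hzy, hzy']
  linear_combination Real.sign x * hinv

lemma sigmaK_pos {x y z : ℝ} (hyz : |y| ≤ z) (hzx : z < |x|) : 0 < sigmaK x y z := by
  have hy := abs_le.1 hyz
  rw [sigmaK_eq]
  rcases lt_trichotomy x 0 with hx | rfl | hx
  · rw [abs_of_neg hx] at hzx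
    have h₁ : exp x < exp (-(z + y) / 2) := exp_lt_exp.2 (by linarith)
    have h₂ : 1 ≤ exp ((z - y) / 2) := one_le_exp (by linarith)
    rw [Real.sign_of_neg hx]
    linarith
  · rw [abs_zero] at hzx
    linarith
  · rw [abs_of_pos hx] at hzx
    have h₁ : exp ((z - y) / 2) < exp x := exp_lt_exp.2 (by linarith)
    have h₂ : exp (-(z + y) / 2) ≤ 1 := exp_le_one_iff.2 (by linarith)
    rw [Real.sign_of_pos hx]
    linarith

noncomputable def KIntegrand (k₁ k₂ x y z : ℝ) : ℝ :=
  sigmaK x y z * (cosh (z / 2) - cosh (y / 2)) ^ (k₁ - 1) *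
    (cosh x - cosh z) ^ (k₂ - 1) * sinh (z / 2)

lemma K_eq (k₁ k₂ x y : ℝ) :
    K k₁ k₂ x y =
      c k₁ k₂ / 4 * (A k₁ k₂ x)⁻¹ * ∫ z in |y|..|x|, KIntegrand k₁ k₂ x y z :=
  rfl

lemma KIntegrand_pos (k₁ k₂ : ℝ) {x y z : ℝ} (hyz : |y| < z) (hzx : z < |x|) :
    0 < KIntegrand k₁ k₂ x y z := by
  have hz : 0 < z := (abs_nonneg y).trans_lt hyz
  have := sigmaK_pos hyz.le hzx
  have := rpow_pos_of_pos (cosh_half_sub_cosh_half_pos hyz) (k₁ - 1)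
  have := rpow_pos_of_pos (cosh_sub_cosh_pos hz.le hzx) (k₂ - 1)
  have : 0 < sinh (z / 2) := sinh_pos_iff.2 (by linarith)
  unfold KIntegrand
  positivity

lemma continuous_sigmaK (x y : ℝ) : Continuous (sigmaK x y) := by
  unfold sigmaK
  fun_prop

lemma intervalIntegrable_KIntegrand {k₁ k₂ x y : ℝ} (hk₁ : 0 < k₁) (hk₂ : 0 < k₂)
    (hyx : |y| < |x|) : IntervalIntegrable (KIntegrand k₁ k₂ x y) volume |y| |x| := by
  obtain ⟨m, hym, hmx⟩ := exists_between hyx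
  have hm : 0 < m := (abs_nonneg y).trans_lt hym
  have near_y : IntervalIntegrable (KIntegrand k₁ k₂ x y) volume |y| m := by
    have hP : IntervalIntegrable
        (fun z => (cosh (z / 2) - cosh (y / 2)) ^ (k₁ - 1) * (sinh (z / 2) * (1 / 2)))
        volume |y| m := by
      apply intervalIntegrable_rpow_sub_one_mul_deriv_of_nonneg hk₁
      · fun_prop
      all_goals rw [min_eq_left hym.le, max_eq_right hym.le]; intro z hz
      · exact ((hasDerivAt_id' z).div_const 2).cosh.sub_const _
      · exact cosh_half_sub_cosh_half_pos hz.1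
      · have := sinh_pos_iff.2 (half_pos ((abs_nonneg y).trans_lt hz.1))
        positivity
    have hrest : ContinuousOn (fun z => 2 * sigmaK x y z * (cosh x - cosh z) ^ (k₂ - 1))
        (uIcc |y| m) := by
      have hQ : ContinuousOn (fun z => (cosh x - cosh z) ^ (k₂ - 1)) (uIcc |y| m) := by
        refine ContinuousOn.rpow_const (by fun_prop) fun z hz => Or.inl ?_
        rw [uIcc_of_le hym.le] at hz
        exact (cosh_sub_cosh_pos ((abs_nonneg y).trans hz.1) (hz.2.trans_lt hmx)).ne'
      have := continuous_sigmaK x y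
      fun_prop
    convert hP.mul_continuousOn hrest using 1
    ext z
    unfold KIntegrand
    ring
  have near_x : IntervalIntegrable (KIntegrand k₁ k₂ x y) volume m |x| := by
    have hQ : IntervalIntegrable (fun z => (cosh x - cosh z) ^ (k₂ - 1) * -sinh z)
        volume m |x| := by
      apply intervalIntegrable_rpow_sub_one_mul_deriv_of_nonpos hk₂
      · fun_prop
      all_goals rw [min_eq_left hmx.le, max_eq_right hmx.le]; intro z hz
      · exact (hasDerivAt_cosh z).const_sub _
      · exact cosh_sub_cosh_pos (hm.trans hz.1).le hz.2
      · exact neg_nonpos.2 (sinh_nonneg_iff.2 (hm.trans hz.1).le)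
    have hrest : ContinuousOn
        (fun z => -(sigmaK x y z * (cosh (z / 2) - cosh (y / 2)) ^ (k₁ - 1)) / (2 * cosh (z / 2)))
        (uIcc m |x|) := by
      have hP :
          ContinuousOn (fun z => (cosh (z / 2) - cosh (y / 2)) ^ (k₁ - 1)) (uIcc m |x|) := by
        refine ContinuousOn.rpow_const (by fun_prop) fun z hz => Or.inl ?_
        rw [uIcc_of_le hmx.le] at hz
        exact (cosh_half_sub_cosh_half_pos (hym.trans_le hz.1)).ne'
      have := continuous_sigmaK x y
      exact ((this.continuousOn.mul hP).neg).div (by fun_prop)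
        fun z _ => (mul_pos two_pos (cosh_pos _)).ne'
    convert hQ.mul_continuousOn hrest using 1
    ext z
    have hsinh : sinh z = 2 * sinh (z / 2) * cosh (z / 2) := by
      rw [← sinh_two_mul, mul_div_cancel₀ z two_ne_zero]
    unfold KIntegrand
    rw [hsinh]
    field_simp [(cosh_pos (z / 2)).ne']
  exact near_y.trans near_x

lemma K_pos {k₁ k₂ x y : ℝ} (hk₁ : 0 < k₁) (hk₂ : 0 < k₂) (hyx : |y| < |x|) :
    0 < K k₁ k₂ x y := by
  have hx : x ≠ 0 := abs_pos.1 ((abs_nonneg y).trans_lt hyx)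
  rw [K_eq]
  have := c_pos hk₁ hk₂
  have := A_pos k₁ k₂ hx
  have := intervalIntegral_pos_of_pos_on (intervalIntegrable_KIntegrand hk₁ hk₂ hyx)
    (fun z hz => KIntegrand_pos k₁ k₂ hz.1 hz.2) hyx
  positivity

lemma K_nonneg {k₁ k₂ x y : ℝ} (hk₁ : 0 < k₁) (hk₂ : 0 < k₂) (hyx : |y| ≤ |x|) :
    0 ≤ K k₁ k₂ x y := by
  rcases hyx.lt_or_eq with hlt | heq
  · exact (K_pos hk₁ hk₂ hlt).le
  · simp [K, heq]

theorem stmt3_general (k₁ k₂ : ℝ) (hk₁ : 0 < k₁) (hk₂ : 0 < k₂)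
    (x : ℝ) (f : ℝ → ℝ)
    (hf0 : ∀ y, 0 ≤ f y) :
    (0 ≤ ∫ y in (-|x|)..|x|, K k₁ k₂ x y * f y) ∧
    (Continuous f →
      ∀ y₀ : ℝ, |y₀| < |x| → 0 < f y₀ →
        IntervalIntegrable (fun y => K k₁ k₂ x y * f y) volume (-|x|) |x| →
        0 < ∫ y in (-|x|)..|x|, K k₁ k₂ x y * f y) := by
  have hKf : ∀ y ∈ Icc (-|x|) |x|, 0 ≤ K k₁ k₂ x y * f y := fun y hy =>
    mul_nonneg (K_nonneg hk₁ hk₂ (abs_le.2 hy)) (hf0 y)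
  refine ⟨intervalIntegral.integral_nonneg (neg_le_self (abs_nonneg x)) hKf, ?_⟩
  intro hf y₀ hy₀ hfy₀ hint
  refine intervalIntegral_pos_of_pos_on_isOpen (U := Ioo (-|x|) |x| ∩ f ⁻¹' Ioi 0)
    (isOpen_Ioo.inter (isOpen_Ioi.preimage hf)) ⟨y₀, abs_lt.1 hy₀, hfy₀⟩
    (inter_subset_left.trans Ioo_subset_Ioc_self) hint (fun y hy => hKf y (Ioc_subset_Icc_self hy))
    fun y hy => mul_pos (K_pos hk₁ hk₂ (abs_lt.2 hy.1)) hy.2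

theorem stmt3 (k₁ k₂ : ℝ) (hk₁ : 0 < k₁) (hk₂ : 0 < k₂)
    (x : ℝ) (hx : x ≠ 0) (f : ℝ → ℝ) (hf : Measurable f)
    (hf0 : ∀ y, 0 ≤ f y) :
    (0 ≤ ∫ y in (-|x|)..|x|, K k₁ k₂ x y * f y) ∧
    (Continuous f →
      ∀ y₀ : ℝ, |y₀| < |x| → 0 < f y₀ →
        IntervalIntegrable (fun y => K k₁ k₂ x y * f y) volume (-|x|) |x| →
        0 < ∫ y in (-|x|)..|x|, K k₁ k₂ x y * f y) :=
  stmt3_general k₁ k₂ hk₁ hk₂ x f hf0
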